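/- The map Θ sending ζ ∈ ℂ with Im ζ ≥ 0 to the matrix [[|ζ|²/(|ζ|²+1), Re ζ/(|ζ|²+1)], [Re ζ/(|ζ|²+1), 1/(|ζ|²+1)]] and ∞ to [[1,0],[0,0]] is a bijection from the closed upper half-plane (including ∞) onto the set of constant 2×2 real positive semidefinite matrices of trace 1, with inverse given by [[h₁,h₃],[h₃,h₂]] ↦ (h₃ + i√(h₁h₂ - h₃²))/h₂ when h₂ ≠ 0 and [[1,0],[0,0]] ↦ ∞. -/

import Mathlib

/-!
A real symmetric matrix `[[a, b], [b, c]]` is positive semidefinite iff `a, c ≥ 0` and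
`b² ≤ ac`. Since `|ζ|² + 1 = 1 / c` once `|ζ|² = a / c` and `a + c = 1`, the equation
`Θ(ζ) = [[a, b], [b, c]]` with `c > 0` amounts to `Re ζ = b / c` and `|ζ|² = a / c`, whose only
solution with `Im ζ ≥ 0` is `ζ = (b + i√(ac - b²)) / c`. If `c = 0`, then `b² ≤ ac` and the
trace condition force the matrix `[[1, 0], [0, 0]] = Θ(∞)`.
-/

open Set

noncomputable section

/-- The closed upper half-plane in the Riemann sphere: `ℂ_+ ∪ ℝ ∪ {∞}`. -/
def closedUHP : Set (OnePoint ℂ) := {p | p = none ∨ ∃ w : ℂ, 0 ≤ w.im ∧ p = some w}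

/-- The map `Θ` from the closed upper half-plane (including `∞`) to constant
Hamiltonians: `Θ(ζ) = [[|ζ|²,Re ζ;Re ζ,1]]/(|ζ|²+1)` and `Θ(∞) = [[1,0],[0,0]]`. -/
def Theta : OnePoint ℂ → Matrix (Fin 2) (Fin 2) ℝ := fun p =>
  match p with
  | none => !![1, 0; 0, 0]
  | some ζ => !![‖ζ‖ ^ 2 / (‖ζ‖ ^ 2 + 1),
                 ζ.re / (‖ζ‖ ^ 2 + 1);
                 ζ.re / (‖ζ‖ ^ 2 + 1),
                 1 / (‖ζ‖ ^ 2 + 1)]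

/-- The inverse map: `[[h₁,h₃],[h₃,h₂]] ↦ (h₃ + i√(h₁h₂ - h₃²))/h₂` when `h₂ ≠ 0`,
and `[[1,0],[0,0]] ↦ ∞`. -/
def ThetaInv : Matrix (Fin 2) (Fin 2) ℝ → OnePoint ℂ := fun A =>
  if A 1 1 = 0 then none
  else some (((A 1 0 : ℂ) +
      (Real.sqrt (A 0 0 * A 1 1 - (A 1 0) ^ 2) : ℂ) * Complex.I) / (A 1 1 : ℂ))

open Complex Matrix

theorem Complex.re_ofReal_add_mul_I_div (b s c : ℝ) : ((b + s * I) / c : ℂ).re = b / c := by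
  simp

theorem Complex.im_ofReal_add_mul_I_div (b s c : ℝ) : ((b + s * I) / c : ℂ).im = s / c := by
  simp

theorem Matrix.posSemidef_fin_two_iff {a b c : ℝ} :
    (!![a, b; b, c]).PosSemidef ↔ 0 ≤ a ∧ 0 ≤ c ∧ b ^ 2 ≤ a * c := by
  refine ⟨fun h ↦ ⟨by simpa using h.diag_nonneg (i := 0), by simpa using h.diag_nonneg (i := 1),
    by simpa [det_fin_two, sq] using h.det_nonneg⟩, ?_⟩
  rintro ⟨ha, hc, hdet⟩
  rw [posSemidef_iff_dotProduct_mulVec]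
  refine ⟨by ext i j; fin_cases i <;> fin_cases j <;> rfl, fun x ↦ ?_⟩
  simp only [star_trivial, dotProduct, mulVec, Fin.sum_univ_two, cons_val_zero, cons_val_one,
    of_apply]
  rcases ha.eq_or_lt with rfl | ha
  · obtain rfl : b = 0 := by nlinarith
    nlinarith [sq_nonneg (x 1)]
  · -- `a · (quadratic form) = (a x₀ + b x₁)² + (ac - b²) x₁²`
    have : 0 ≤ a * (x 0 * (a * x 0 + b * x 1) + x 1 * (b * x 0 + c * x 1)) := by
      nlinarith [sq_nonneg (a * x 0 + b * x 1), mul_nonneg (sub_nonneg.2 hdet) (sq_nonneg (x 1))]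
    exact nonneg_of_mul_nonneg_right (by linarith) ha

theorem theta_some (ζ : ℂ) :
    Theta (some ζ) = (‖ζ‖ ^ 2 + 1)⁻¹ • !![‖ζ‖ ^ 2, ζ.re; ζ.re, 1] := by
  ext i j; fin_cases i <;> fin_cases j <;> simp [Theta, div_eq_inv_mul]

theorem thetaInv_of_ne_zero {a b c : ℝ} (hc : c ≠ 0) :
    ThetaInv !![a, b; b, c] = some ((b + √(a * c - b ^ 2) * I) / c) := by
  simp [ThetaInv, hc]; rfl

theorem theta_some_eq {ζ : ℂ} {a b c : ℝ} (hc : c ≠ 0) (hre : ζ.re = b / c)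
    (hnorm : ‖ζ‖ ^ 2 = a / c) (htr : a + c = 1) : Theta (some ζ) = !![a, b; b, c] := by
  have hd : ‖ζ‖ ^ 2 + 1 = c⁻¹ := by
    rw [hnorm]; field_simp; linarith
  rw [theta_some, hd, hnorm, hre, inv_inv]
  ext i j; fin_cases i <;> fin_cases j <;> simp [mul_div_cancel₀ _ hc]

theorem theta_mapsTo :
    MapsTo Theta closedUHP {A : Matrix (Fin 2) (Fin 2) ℝ | A.PosSemidef ∧ A.trace = 1} := by
  rintro p (rfl | ⟨w, -, rfl⟩)
  · exact ⟨posSemidef_fin_two_iff.2 ⟨zero_le_one, le_rfl, by norm_num⟩, by simp [Theta]⟩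
  · have hd : 0 < ‖w‖ ^ 2 + 1 := by positivity
    have hre : w.re ^ 2 ≤ ‖w‖ ^ 2 * 1 := by
      rw [mul_one, Complex.sq_norm, normSq_apply]
      nlinarith [mul_self_nonneg w.im]
    rw [theta_some]
    refine ⟨(posSemidef_fin_two_iff.2 ⟨by positivity, zero_le_one, hre⟩).smul (inv_nonneg.2 hd.le),
      ?_⟩
    rw [trace_smul, trace_fin_two_of, smul_eq_mul, inv_mul_cancel₀ hd.ne']

theorem thetaInv_mapsTo :
    MapsTo ThetaInv {A : Matrix (Fin 2) (Fin 2) ℝ | A.PosSemidef ∧ A.trace = 1} closedUHP := by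
  rintro A ⟨hA, -⟩
  by_cases h : A 1 1 = 0
  · exact Or.inl (if_pos h)
  · have hc : 0 < A 1 1 := hA.diag_nonneg.lt_of_ne' h
    refine Or.inr ⟨_, ?_, if_neg h⟩
    rw [im_ofReal_add_mul_I_div]
    positivity

theorem theta_leftInvOn : LeftInvOn ThetaInv Theta closedUHP := by
  rintro p (rfl | ⟨w, hw, rfl⟩)
  · simp [Theta, ThetaInv]; rfl
  · have hd : 0 < ‖w‖ ^ 2 + 1 := by positivity
    have hdet : ‖w‖ ^ 2 / (‖w‖ ^ 2 + 1) * (1 / (‖w‖ ^ 2 + 1)) - (w.re / (‖w‖ ^ 2 + 1)) ^ 2 =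
        (w.im / (‖w‖ ^ 2 + 1)) ^ 2 := by
      field_simp
      rw [Complex.sq_norm, normSq_apply]
      ring
    change ThetaInv !![_, _; _, _] = _
    rw [thetaInv_of_ne_zero (by positivity), hdet, Real.sqrt_sq (by positivity)]
    congr 1
    apply Complex.ext
    · rw [re_ofReal_add_mul_I_div]; field_simp
    · rw [im_ofReal_add_mul_I_div]; field_simp

theorem theta_rightInvOn :
    RightInvOn ThetaInv Theta {A : Matrix (Fin 2) (Fin 2) ℝ | A.PosSemidef ∧ A.trace = 1} := by
  rintro A ⟨hA, htr⟩
  obtain ⟨a, b, c, rfl⟩ : ∃ a b c : ℝ, A = !![a, b; b, c] :=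
    ⟨A 0 0, A 1 0, A 1 1, by rw [eta_fin_two A, ← hA.1.apply 1 0]; rfl⟩
  obtain ⟨ha, hc, hdet⟩ := posSemidef_fin_two_iff.1 hA
  rw [trace_fin_two_of] at htr
  rcases hc.eq_or_lt with rfl | hc
  · obtain rfl : a = 1 := by linarith
    obtain rfl : b = 0 := by nlinarith
    simp [ThetaInv, Theta]
  · rw [thetaInv_of_ne_zero hc.ne']
    refine theta_some_eq hc.ne' (re_ofReal_add_mul_I_div _ _ _) ?_ htr
    rw [Complex.sq_norm, normSq_apply, re_ofReal_add_mul_I_div, im_ofReal_add_mul_I_div,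
      div_mul_div_comm, div_mul_div_comm, Real.mul_self_sqrt (sub_nonneg.2 hdet)]
    field_simp
    ring

/-- `Θ` is a bijection from the closed upper half-plane (including `∞`) onto the set of
real positive semidefinite `2×2` matrices with trace `1`, with inverse `ThetaInv`. -/
theorem theta_bijection :
    Set.BijOn Theta closedUHP
        {A : Matrix (Fin 2) (Fin 2) ℝ | A.PosSemidef ∧ A.trace = 1} ∧
      Set.InvOn ThetaInv Theta closedUHP
        {A : Matrix (Fin 2) (Fin 2) ℝ | A.PosSemidef ∧ A.trace = 1} :=
  have hinv : InvOn ThetaInv Theta closedUHP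
      {A : Matrix (Fin 2) (Fin 2) ℝ | A.PosSemidef ∧ A.trace = 1} :=
    ⟨theta_leftInvOn, theta_rightInvOn⟩
  ⟨hinv.bijOn theta_mapsTo thetaInv_mapsTo, hinv⟩

end
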